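/- arXiv:2512.14934 — 4 statements merged into one kernel-verified Lean document; each statement's English description precedes it below -/
import Mathlib

section
/- Let n ≥ 1 and let X be a finite set of points in n-dimensional Euclidean space with diameter at most ε. Then every point of the convex hull of X lies within distance ε/Rₙ of some point of X, where Rₙ = √(2(n+1)/n). -/
open Finset

local notation "⟪" x ", " y "⟫" => @inner ℝ _ _ x y

lemma jung_key {E : Type*} [NormedAddCommGroup E] [InnerProductSpace ℝ E]
    {ι : Type*} [Fintype ι] (z : ι → E) (w : ι → ℝ)
    (hw0 : ∀ i, 0 ≤ w i) (hw1 : ∑ i, w i = 1) (y : E) (hy : ∑ i, w i • z i = y)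
    (ε : ℝ) (hε : ∀ i j, dist (z i) (z j) ≤ ε)
    (m : ℕ) (hm : 1 ≤ m) (hcard : Fintype.card ι ≤ m + 1) :
    ∃ i, dist y (z i) ≤ ε / Real.sqrt (2 * (m + 1) / m) := by
  classical
  haveI : Nonempty ι := by
    rcases isEmpty_or_nonempty ι with h | h
    · simp at hw1
    · exact h
  obtain ⟨i⟩ := ‹Nonempty ι›
  have hε0 : 0 ≤ ε := le_trans dist_nonneg (hε i i)
  -- Identity A
  have hA : ∑ i, w i * ‖y - z i‖ ^ 2 = (∑ i, w i * ‖z i‖ ^ 2) - ‖y‖ ^ 2 := by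
    have hyy : ∑ i, w i * ⟪y, z i⟫ = ‖y‖ ^ 2 := by
      rw [← real_inner_self_eq_norm_sq, ← hy, inner_sum]
      simp [real_inner_smul_right]
    calc ∑ i, w i * ‖y - z i‖ ^ 2
        = ∑ i, (w i * ‖y‖ ^ 2 - 2 * (w i * ⟪y, z i⟫) + w i * ‖z i‖ ^ 2) := by
          refine Finset.sum_congr rfl fun i _ => ?_
          rw [norm_sub_sq_real]; ring
      _ = (∑ i, w i) * ‖y‖ ^ 2 - 2 * ∑ i, w i * ⟪y, z i⟫ + ∑ i, w i * ‖z i‖ ^ 2 := by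
          rw [Finset.sum_add_distrib, Finset.sum_sub_distrib, ← Finset.mul_sum,
            ← Finset.sum_mul]
      _ = (∑ i, w i * ‖z i‖ ^ 2) - ‖y‖ ^ 2 := by rw [hw1, hyy]; ring
  -- Identity B
  have hB : ∑ i, ∑ j, w i * w j * ‖z i - z j‖ ^ 2 = 2 * ∑ i, w i * ‖y - z i‖ ^ 2 := by
    have expand : ∀ i j : ι, w i * w j * ‖z i - z j‖ ^ 2
        = w i * (w j * ‖z j‖ ^ 2) + w j * (w i * ‖z i‖ ^ 2)
          - 2 * (w i * (w j * ⟪z i, z j⟫)) := by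
      intro i j; rw [norm_sub_sq_real]; ring
    have hinner : ∑ i, ∑ j, w i * (w j * ⟪z i, z j⟫) = ‖y‖ ^ 2 := by
      rw [← real_inner_self_eq_norm_sq, ← hy, sum_inner]
      refine Finset.sum_congr rfl fun i _ => ?_
      rw [inner_sum]
      refine Finset.sum_congr rfl fun j _ => ?_
      rw [real_inner_smul_left, real_inner_smul_right]
    calc ∑ i, ∑ j, w i * w j * ‖z i - z j‖ ^ 2
        = ∑ i, (w i * ∑ j, w j * ‖z j‖ ^ 2 + (∑ j, w j) * (w i * ‖z i‖ ^ 2)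
            - 2 * ∑ j, w i * (w j * ⟪z i, z j⟫)) := by
          refine Finset.sum_congr rfl fun i _ => ?_
          simp only [expand, Finset.sum_add_distrib, Finset.sum_sub_distrib,
            ← Finset.mul_sum, ← Finset.sum_mul]
      _ = (∑ i, w i) * (∑ j, w j * ‖z j‖ ^ 2) + (∑ j, w j) * (∑ i, w i * ‖z i‖ ^ 2)
            - 2 * ∑ i, ∑ j, w i * (w j * ⟪z i, z j⟫) := by
          rw [Finset.sum_sub_distrib, Finset.sum_add_distrib, ← Finset.sum_mul,
            ← Finset.mul_sum, ← Finset.mul_sum]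
      _ = 2 * ((∑ i, w i * ‖z i‖ ^ 2) - ‖y‖ ^ 2) := by rw [hw1, hinner]; ring
      _ = 2 * ∑ i, w i * ‖y - z i‖ ^ 2 := by rw [hA]
  -- Bound C
  have hC : ∑ i, ∑ j, w i * w j * ‖z i - z j‖ ^ 2 ≤ ε ^ 2 * (1 - ∑ i, w i ^ 2) := by
    have step : ∀ i : ι, ∑ j, w i * w j * ‖z i - z j‖ ^ 2
        ≤ (∑ j, w i * w j * ε ^ 2) - w i ^ 2 * ε ^ 2 := by
      intro i
      have : ∑ j, w i * w j * ‖z i - z j‖ ^ 2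
          ≤ ∑ j, (w i * w j * ε ^ 2 - if i = j then w i ^ 2 * ε ^ 2 else 0) := by
        refine Finset.sum_le_sum fun j _ => ?_
        by_cases h : i = j
        · subst h
          simp only [if_true, sub_self, norm_zero]
          nlinarith [sq_nonneg (w i), sq_nonneg ε]
        · simp only [h, if_false, sub_zero]
          have h1 : ‖z i - z j‖ ≤ ε := by rw [← dist_eq_norm]; exact hε i j
          have h2 : ‖z i - z j‖ ^ 2 ≤ ε ^ 2 := by nlinarith [norm_nonneg (z i - z j)]
          have h3 : 0 ≤ w i * w j := mul_nonneg (hw0 i) (hw0 j)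
          nlinarith
      refine this.trans ?_
      rw [Finset.sum_sub_distrib]
      have : ∑ j : ι, (if i = j then w i ^ 2 * ε ^ 2 else 0) = w i ^ 2 * ε ^ 2 := by
        rw [Finset.sum_ite_eq]; simp
      rw [this]
    calc ∑ i, ∑ j, w i * w j * ‖z i - z j‖ ^ 2
        ≤ ∑ i, ((∑ j, w i * w j * ε ^ 2) - w i ^ 2 * ε ^ 2) :=
          Finset.sum_le_sum fun i _ => step i
      _ = (∑ i, w i) * ((∑ j, w j) * ε ^ 2) - (∑ i, w i ^ 2) * ε ^ 2 := by
          have e : ∀ i : ι, ∑ j, w i * w j * ε ^ 2 = w i * ((∑ j, w j) * ε ^ 2) := by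
            intro i
            rw [Finset.sum_mul, Finset.mul_sum]
            exact Finset.sum_congr rfl fun j _ => by ring
          simp only [e]
          rw [Finset.sum_sub_distrib, ← Finset.sum_mul, ← Finset.sum_mul]
      _ = ε ^ 2 * (1 - ∑ i, w i ^ 2) := by rw [hw1]; ring
  -- Bound D : 1/(m+1) ≤ ∑ w²
  have hD : (1 : ℝ) / (m + 1) ≤ ∑ i, w i ^ 2 := by
    have h1 : (1 : ℝ) ≤ (Fintype.card ι : ℝ) * ∑ i, w i ^ 2 := by
      have := sq_sum_le_card_mul_sum_sq (s := (Finset.univ : Finset ι)) (f := w)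
      rw [hw1] at this
      simpa using this
    have h2 : (Fintype.card ι : ℝ) ≤ (m : ℝ) + 1 := by exact_mod_cast hcard
    have h3 : 0 ≤ ∑ i, w i ^ 2 := Finset.sum_nonneg fun i _ => sq_nonneg _
    rw [div_le_iff₀ (by positivity)]
    nlinarith
  -- combine: S ≤ ε² m / (2(m+1))
  have hS : ∑ i, w i * ‖y - z i‖ ^ 2 ≤ ε ^ 2 * m / (2 * (m + 1)) := by
    have hm1 : (0:ℝ) < (m:ℝ) + 1 := by positivity
    have h0 := hB ▸ hC
    have h4 : ε ^ 2 * (1 - 1 / (m + 1)) ≤ ε ^ 2 * (m / (m + 1)) := by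
      have : (1 : ℝ) - 1 / (m + 1) = m / (m + 1) := by field_simp; ring
      rw [this]
    have h5 : ε ^ 2 * (1 - ∑ i, w i ^ 2) ≤ ε ^ 2 * (1 - 1 / (m + 1)) := by
      have := sq_nonneg ε
      nlinarith
    have heq : ε ^ 2 * ((m : ℝ) / (m + 1)) = 2 * (ε ^ 2 * m / (2 * (m + 1))) := by
      field_simp
    linarith
  -- pick minimizer
  obtain ⟨i0, _, hi0⟩ := Finset.exists_min_image Finset.univ
    (fun i => ‖y - z i‖ ^ 2) ⟨i, Finset.mem_univ i⟩
  have hmin : ‖y - z i0‖ ^ 2 ≤ ∑ i, w i * ‖y - z i‖ ^ 2 := by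
    calc ‖y - z i0‖ ^ 2 = (∑ i, w i) * ‖y - z i0‖ ^ 2 := by rw [hw1, one_mul]
      _ = ∑ i, w i * ‖y - z i0‖ ^ 2 := by rw [Finset.sum_mul]
      _ ≤ ∑ i, w i * ‖y - z i‖ ^ 2 :=
          Finset.sum_le_sum fun j _ =>
            mul_le_mul_of_nonneg_left (hi0 j (Finset.mem_univ j)) (hw0 j)
  refine ⟨i0, ?_⟩
  have hmpos : (0:ℝ) < (m:ℝ) := by exact_mod_cast hm
  have hc : (0:ℝ) < 2 * ((m:ℝ) + 1) / m := by positivity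
  have hrhs : (ε / Real.sqrt (2 * (m + 1) / m)) ^ 2 = ε ^ 2 * m / (2 * (m + 1)) := by
    rw [div_pow, Real.sq_sqrt hc.le, div_div_eq_mul_div]
  have h6 : dist y (z i0) ^ 2 ≤ (ε / Real.sqrt (2 * (m + 1) / m)) ^ 2 := by
    rw [hrhs, dist_eq_norm]
    exact hmin.trans hS
  have h7 : 0 ≤ ε / Real.sqrt (2 * (m + 1) / m) := by positivity
  nlinarith [dist_nonneg (x := y) (y := z i0), h6, h7]

/-- Jung's theorem (as used in the paper): a finite set in `ℝⁿ` of diameter at most `ε`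
has every point of its convex hull within distance `ε / Rₙ` of some point of the set,
where `Rₙ = √(2(n+1)/n)`. -/
theorem jung_theorem (n : ℕ) (hn : 1 ≤ n) (X : Set (EuclideanSpace ℝ (Fin n)))
    (hXfin : X.Finite) (ε : ℝ) (hdiam : Metric.diam X ≤ ε) :
    ∀ y ∈ convexHull ℝ X, ∃ x ∈ X, dist y x ≤ ε / Real.sqrt (2 * (n + 1) / n) := by
  intro y hy
  obtain ⟨ι, hfin, z, w, hrange, haff, hwpos, hw1, hzy⟩ :=
    eq_pos_convex_span_of_mem_convexHull hy
  letI := hfin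
  have hcard : Fintype.card ι ≤ n + 1 := by
    have h1 := haff.card_le_finrank_succ
    have h2 : Module.finrank ℝ (vectorSpan ℝ (Set.range z))
        ≤ Module.finrank ℝ (EuclideanSpace ℝ (Fin n)) := Submodule.finrank_le _
    rw [finrank_euclideanSpace_fin] at h2
    omega
  have hε : ∀ i j, dist (z i) (z j) ≤ ε := fun i j =>
    le_trans (Metric.dist_le_diam_of_mem hXfin.isBounded
      (hrange (Set.mem_range_self i)) (hrange (Set.mem_range_self j))) hdiam
  obtain ⟨i, hi⟩ := jung_key z w (fun i => (hwpos i).le) hw1 y hzy ε hε n hn hcard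
  exact ⟨z i, hrange (Set.mem_range_self i), hi⟩
end

section
/- Let X be a compact metric space, let Y be a metric space, and let f : X → Y be ε-continuous. Then for every γ > 0 there exists α > 0 such that for every finite subset S ⊆ X with diam(S) ≤ α, the image f(S) has diameter at most ε + γ. -/
/-- A function between metric spaces is `ε`-continuous if every point has a
neighborhood whose image has diameter at most `ε`. -/
def EpsContinuous {X Y : Type*} [MetricSpace X] [MetricSpace Y] (ε : ℝ) (f : X → Y) : Prop :=
  ∀ x : X, ∃ U ∈ nhds x, ∀ a ∈ U, ∀ b ∈ U, dist (f a) (f b) ≤ ε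

/-- If `f : X → Y` is an `ε`-continuous map from a compact metric space, then for every
`γ > 0` there is `α > 0` such that every finite subset of `X` of diameter at most `α`
has image of diameter at most `ε + γ`. -/
theorem eps_continuous_finite_image_diam {X Y : Type*} [MetricSpace X] [MetricSpace Y]
    [CompactSpace X] (f : X → Y) (ε : ℝ) (hε : 0 ≤ ε) (hf : EpsContinuous ε f) :
    ∀ γ : ℝ, 0 < γ → ∃ α : ℝ, 0 < α ∧ ∀ S : Finset X,
      Metric.diam (S : Set X) ≤ α → Metric.diam (f '' (S : Set X)) ≤ ε + γ := by
  intro γ hγ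
  choose U hU hUdiam using hf
  have hcover : (Set.univ : Set X) ⊆ ⋃ x, interior (U x) := by
    intro x _
    exact Set.mem_iUnion.2 ⟨x, mem_interior_iff_mem_nhds.2 (hU x)⟩
  obtain ⟨δ, hδ, hδball⟩ := lebesgue_number_lemma_of_metric isCompact_univ
    (fun i => isOpen_interior) hcover
  refine ⟨δ / 2, by linarith, fun S hS => ?_⟩
  rcases S.eq_empty_or_nonempty with rfl | ⟨x₀, hx₀⟩
  · simpa using by linarith
  obtain ⟨i, hi⟩ := hδball x₀ (Set.mem_univ _)
  have hsub : (S : Set X) ⊆ U i := by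
    intro a ha
    refine interior_subset (hi ?_)
    have : dist a x₀ ≤ δ / 2 :=
      le_trans (Metric.dist_le_diam_of_mem S.finite_toSet.isBounded ha (by exact_mod_cast hx₀)) hS
    exact Metric.mem_ball.2 (lt_of_le_of_lt this (by linarith))
  refine le_trans (Metric.diam_le_of_forall_dist_le hε ?_) (by linarith)
  rintro _ ⟨a, ha, rfl⟩ _ ⟨b, hb, rfl⟩
  exact hUdiam i a (hsub ha) b (hsub hb)
end

section
/- Let f : [−1, 1] → [−1, 1] be ε-continuous for some ε ≥ 0. Then for every ε' > ε/2 there exists x ∈ [−1, 1] with |x − f(x)| ≤ ε'. -/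
/-- One-dimensional Main Theorem: an `ε`-continuous self-map of `[-1, 1]` has an
`ε'`-fixed point for every `ε' > ε / 2`. -/
theorem main_theorem_dim_one (ε : ℝ) (hε : 0 ≤ ε)
    (f : Set.Icc (-1 : ℝ) 1 → Set.Icc (-1 : ℝ) 1) (hf : EpsContinuous ε f)
    (ε' : ℝ) (hε' : ε / 2 < ε') :
    ∃ x : Set.Icc (-1 : ℝ) 1, |(x : ℝ) - (f x : ℝ)| ≤ ε' := by
  set S : Set ℝ := {x | ∃ h : x ∈ Set.Icc (-1 : ℝ) 1, x ≤ (f ⟨x, h⟩ : ℝ)} with hS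
  have hm1I : (-1 : ℝ) ∈ Set.Icc (-1 : ℝ) 1 := ⟨le_refl _, by norm_num⟩
  have hne : (-1 : ℝ) ∈ S := ⟨hm1I, (f ⟨-1, hm1I⟩).2.1⟩
  have hbdd : BddAbove S := ⟨1, fun x hx => hx.1.2⟩
  set c := sSup S with hc
  have hc1 : c ≤ 1 := csSup_le ⟨_, hne⟩ (fun x hx => hx.1.2)
  have hcm1 : (-1 : ℝ) ≤ c := le_csSup hbdd hne
  have hcI : c ∈ Set.Icc (-1 : ℝ) 1 := ⟨hcm1, hc1⟩
  obtain ⟨U, hU, hdiam⟩ := hf ⟨c, hcI⟩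
  obtain ⟨δ₀, hδ₀, hball⟩ := Metric.mem_nhds_iff.1 hU
  set δ := min δ₀ (2 * ε' - ε) with hδdef
  have hδpos : 0 < δ := lt_min hδ₀ (by linarith)
  have hδδ₀ : δ ≤ δ₀ := min_le_left _ _
  have hδε : δ ≤ 2 * ε' - ε := min_le_right _ _
  -- point a slightly below c with f a ≥ a
  obtain ⟨a, haS, hal⟩ := exists_lt_of_lt_csSup ⟨_, hne⟩ (show c - δ / 2 < c by linarith)
  obtain ⟨haI, hafa⟩ := haS
  have hac : a ≤ c := le_csSup hbdd ⟨haI, hafa⟩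
  -- point b slightly above c with f b ≤ b
  set b := min (c + δ / 2) 1 with hbdef
  have hbI : b ∈ Set.Icc (-1 : ℝ) 1 := ⟨le_min (by linarith) (by norm_num), min_le_right _ _⟩
  have hcb : c ≤ b := le_min (by linarith) hc1
  have hbc : b ≤ c + δ / 2 := min_le_left _ _
  have hfb : (f ⟨b, hbI⟩ : ℝ) ≤ b := by
    rcases lt_or_eq_of_le hcb with hlt | heq
    · by_contra h
      have hmem : b ∈ S := ⟨hbI, le_of_lt (not_le.1 h)⟩
      exact absurd (le_csSup hbdd hmem) (not_le.2 hlt)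
    · have hb1 : b = 1 := by
        rcases min_cases (c + δ / 2) 1 with ⟨h1, h2⟩ | ⟨h1, h2⟩
        · exfalso; rw [hbdef] at heq; linarith
        · exact h1
      have : (f ⟨b, hbI⟩ : ℝ) ≤ 1 := (f _).2.2
      linarith
  -- both a and b are in U
  have haU : (⟨a, haI⟩ : Set.Icc (-1 : ℝ) 1) ∈ U := by
    apply hball
    simp only [Metric.mem_ball, Subtype.dist_eq, Real.dist_eq]
    rw [abs_of_nonpos (show a - c ≤ 0 by linarith)]
    show -(a - c) < δ₀
    linarith
  have hbU : (⟨b, hbI⟩ : Set.Icc (-1 : ℝ) 1) ∈ U := by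
    apply hball
    simp only [Metric.mem_ball, Subtype.dist_eq, Real.dist_eq]
    rw [abs_of_nonneg (show (0:ℝ) ≤ b - c by linarith)]
    show b - c < δ₀
    linarith
  have hd : |(f ⟨a, haI⟩ : ℝ) - (f ⟨b, hbI⟩ : ℝ)| ≤ ε := by
    have h := hdiam _ haU _ hbU
    rwa [Subtype.dist_eq, Real.dist_eq] at h
  obtain ⟨hd1, hd2⟩ := abs_le.1 hd
  by_cases hcase : (f ⟨a, haI⟩ : ℝ) - a ≤ ε'
  · refine ⟨⟨a, haI⟩, ?_⟩
    show |a - (f ⟨a, haI⟩ : ℝ)| ≤ ε'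
    rw [abs_sub_comm, abs_of_nonneg (by linarith)]
    linarith
  · refine ⟨⟨b, hbI⟩, ?_⟩
    show |b - (f ⟨b, hbI⟩ : ℝ)| ≤ ε'
    rw [abs_of_nonneg (by linarith)]
    push_neg at hcase
    linarith
end

section
/- Let 0 < ε ≤ 2 and define f : [−1, 1] → [−1, 1] by f(x) = ε/2 if x ≤ 0 and f(x) = −ε/2 if x > 0. Then f is ε-continuous, and for every ε' < ε/2 the function f has no ε'-fixed point, i.e., |x − f(x)| > ε' for every x ∈ [−1, 1]. -/
/-- One-dimensional Optimality Result: for `0 < ε ≤ 2`, the map `f : [-1,1] → [-1,1]`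
sending `x ≤ 0` to `ε/2` and `x > 0` to `-ε/2` is `ε`-continuous and has no
`ε'`-fixed point for any `ε' < ε / 2`. -/
theorem optimality_dim_one (ε : ℝ) (hε0 : 0 < ε) (hε2 : ε ≤ 2)
    (f : Set.Icc (-1 : ℝ) 1 → Set.Icc (-1 : ℝ) 1)
    (hf : ∀ x : Set.Icc (-1 : ℝ) 1,
      ((x : ℝ) ≤ 0 → (f x : ℝ) = ε / 2) ∧ (0 < (x : ℝ) → (f x : ℝ) = -(ε / 2))) :
    EpsContinuous ε f ∧
      ∀ ε' : ℝ, ε' < ε / 2 → ∀ x : Set.Icc (-1 : ℝ) 1, ε' < |(x : ℝ) - (f x : ℝ)| := by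
  have hval : ∀ y : Set.Icc (-1 : ℝ) 1, (f y : ℝ) = ε / 2 ∨ (f y : ℝ) = -(ε / 2) := by
    intro y
    rcases le_or_gt (y : ℝ) 0 with h | h
    · exact Or.inl ((hf y).1 h)
    · exact Or.inr ((hf y).2 h)
  constructor
  · intro x
    refine ⟨Set.univ, Filter.univ_mem, fun a _ b _ => ?_⟩
    have : dist (f a) (f b) = |(f a : ℝ) - (f b : ℝ)| := rfl
    rw [this]
    rcases hval a with ha | ha <;> rcases hval b with hb | hb <;>
      rw [ha, hb] <;> rw [abs_le] <;> constructor <;> linarith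
  · intro ε' hε' x
    rcases le_or_gt (x : ℝ) 0 with h | h
    · rw [(hf x).1 h, abs_of_nonpos (by linarith)]
      linarith
    · rw [(hf x).2 h, abs_of_pos (by linarith)]
      linarith
end
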